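/- Suppose s | g and {B₀,…,B_{M−1}} is a (g, {K₀,…,K_{M−1}}, 1)-BNCDP of size u, with B_j = {B₀^j,…,B_{u−1}^j}, such that for each j the set of all elements of the base blocks of B_j is a complete system of representatives for the cosets of sZ_g in Z_g. If there exists a homogeneous (w, t, 1)-CDM over Z_w with t = max_{0≤k<u} Σ_{j=0}^{M−1} |B_k^j| and gcd(w, g/s) = 1, then there exists a (gw, {K₀,…,K_{M−1}}, 1)-BNCDP of size uw, say {B₀′,…,B_{M−1}′}, such that for each j the set of all elements of the base blocks of B_j′ is a complete system of representatives for the cosets of swZ_{gw} in Z_{gw}. -/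
import Mathlib


open scoped Classical

/-- The multiset of all elements of the base blocks of a family `B`. -/
def blockElems {n u : ℕ} (B : Fin u → Finset (ZMod n)) : Multiset (ZMod n) :=
  ∑ i : Fin u, (B i).val

/-- The multiset of internal differences `Δ(B)`. -/
def deltaList {n u : ℕ} (B : Fin u → Finset (ZMod n)) : Multiset (ZMod n) :=
  ∑ i : Fin u, (((B i) ×ˢ (B i)).filter (fun p => p.1 ≠ p.2)).val.map (fun p => p.1 - p.2)

/-- The multiset of external differences `Δ_E(B, B')`. -/
def deltaE {n u : ℕ} (B B' : Fin u → Finset (ZMod n)) : Multiset (ZMod n) :=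
  ∑ i : Fin u, ((B i) ×ˢ (B' i)).val.map (fun p => p.2 - p.1)

/-- `x` is a multiple of `d` in `ZMod n`, i.e. `x ∈ d·Z_n`. -/
def inSub (n d : ℕ) (x : ZMod n) : Prop := ∃ y : ZMod n, x = (d : ZMod n) * y

/-- The multiset `T` is a complete system of representatives for the cosets of
`d·Z_n` in `Z_n`: each coset contains exactly one element of `T`
(counted with multiplicity). -/
def IsCSR (n d : ℕ) (T : Multiset (ZMod n)) : Prop :=
  ∀ x : ZMod n, Multiset.card (T.filter (fun t => inSub n d (x - t))) = 1

/-- `B` is an `(n, K, λ)`-CDP. -/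
def IsCDP (n u lam : ℕ) (K : Set ℕ) (B : Fin u → Finset (ZMod n)) : Prop :=
  (∀ i, (B i).card ∈ K) ∧ ∀ x : ZMod n, x ≠ 0 → (deltaList B).count x ≤ lam

/-- `B` is an `(n, {K₀,…,K_{M−1}}, λ)`-BNCDP of size `u`. -/
def IsBNCDP (n M u lam : ℕ) (K : Fin M → Set ℕ)
    (B : Fin M → Fin u → Finset (ZMod n)) : Prop :=
  (∀ j, IsCDP n u lam (K j) (B j)) ∧
  ∀ j j' : Fin M, j ≠ j' → ∀ x : ZMod n, (deltaE (B j) (B j')).count x ≤ lam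

/-- `B` is an `(n, g, K, 1)`-CRDP (relative to the subgroup `H = (n/g)·Z_n` of order `g`). -/
def IsCRDP (n g u : ℕ) (K : Set ℕ) (B : Fin u → Finset (ZMod n)) : Prop :=
  (∀ i, (B i).card ∈ K) ∧
  (∀ x : ZMod n, inSub n (n / g) x → (deltaList B).count x = 0) ∧
  (∀ x : ZMod n, (deltaList B).count x ≤ 1)

/-- `B` is an `(n, g, {K₀,…,K_{M−1}}, 1)`-BNCRDP of size `u`. -/
def IsBNCRDP (n g M u : ℕ) (K : Fin M → Set ℕ)
    (B : Fin M → Fin u → Finset (ZMod n)) : Prop :=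
  (∀ j, IsCRDP n g u (K j) (B j)) ∧
  ∀ j j' : Fin M, j ≠ j' →
    (∀ x : ZMod n, inSub n (n / g) x → (deltaE (B j) (B j')).count x = 0) ∧
    (∀ x : ZMod n, (deltaE (B j) (B j')).count x ≤ 1)

/-- A homogeneous `(w, t, 1)`-CDM over `Z_w`: a `t × w` matrix in which every row
contains each element of `Z_w` exactly once and, for any two distinct rows, their
componentwise difference contains each element of `Z_w` exactly once. -/
def IsHomogeneousCDM (w t : ℕ) (D : Fin t → Fin w → ZMod w) : Prop :=
  (∀ r, Function.Bijective (D r)) ∧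
  ∀ r h : Fin t, r ≠ h → Function.Bijective (fun c => D h c - D r c)


set_option linter.unusedSectionVars false

section Aux

variable (g w : ℕ)

/-- canonical lift `ZMod g → ZMod (g*w)` -/
def iot (a : ZMod g) : ZMod (g * w) := (a.val : ZMod (g * w))

/-- the embedding `ZMod w → ZMod (g*w)`, `x ↦ g·x` -/
def phi (x : ZMod w) : ZMod (g * w) := ((g * x.val : ℕ) : ZMod (g * w))

/-- projection `ZMod (g*w) → ZMod g` -/
def pr : ZMod (g * w) →+* ZMod g := ZMod.castHom (dvd_mul_right g w) (ZMod g)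

variable [NeZero g] [NeZero w]

lemma pr_iot (a : ZMod g) : pr g w (iot g w a) = a := by
  simp [pr, iot, map_natCast, ZMod.natCast_val, ZMod.cast_id]

lemma pr_phi (x : ZMod w) : pr g w (phi g w x) = 0 := by
  unfold pr phi
  rw [map_natCast]
  push_cast
  simp [ZMod.natCast_self]

lemma iot_zero : iot g w 0 = 0 := by simp [iot]

lemma phi_mod (m : ℕ) : ((g * (m % w) : ℕ) : ZMod (g * w)) = ((g * m : ℕ) : ZMod (g * w)) := by
  conv_rhs => rw [← Nat.mod_add_div m w]
  have h : (g * (m % w + w * (m / w)) : ℕ) = g * (m % w) + g * w * (m / w) := by ring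
  rw [h]
  push_cast [ZMod.natCast_self (g * w)]
  ring

lemma phi_add (x y : ZMod w) : phi g w (x + y) = phi g w x + phi g w y := by
  unfold phi
  rw [ZMod.val_add, phi_mod]
  push_cast
  ring

/-- `phi` as an additive monoid hom. -/
def phiHom : ZMod w →+ ZMod (g * w) := AddMonoidHom.mk' (phi g w) (phi_add g w)

lemma phi_inj : Function.Injective (phi g w) := by
  intro x y hxy
  have hx : (g * x.val) < g * w := by
    have := ZMod.val_lt x
    exact (Nat.mul_lt_mul_left (Nat.pos_of_ne_zero (NeZero.ne g))).mpr this
  have hy : (g * y.val) < g * w := by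
    have := ZMod.val_lt y
    exact (Nat.mul_lt_mul_left (Nat.pos_of_ne_zero (NeZero.ne g))).mpr this
  have : (g * x.val) = (g * y.val) := by
    have h1 := ZMod.val_cast_of_lt hx
    have h2 := ZMod.val_cast_of_lt hy
    rw [← h1, ← h2]
    exact congrArg ZMod.val hxy
  have hg : 0 < g := Nat.pos_of_ne_zero (NeZero.ne g)
  exact ZMod.val_injective w (Nat.eq_of_mul_eq_mul_left hg this)

lemma kappa_bij : Function.Bijective (fun p : ZMod g × ZMod w => iot g w p.1 + phi g w p.2) := by
  haveI : NeZero (g * w) := ⟨Nat.mul_ne_zero (NeZero.ne g) (NeZero.ne w)⟩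
  rw [Fintype.bijective_iff_injective_and_card]
  constructor
  · rintro ⟨a, x⟩ ⟨a', x'⟩ h
    simp only at h
    have ha : a = a' := by
      have := congrArg (pr g w) h
      simpa [map_add, pr_iot, pr_phi] using this
    subst ha
    have : phi g w x = phi g w x' := by
      have := add_left_cancel h
      exact this
    exact Prod.ext rfl (phi_inj g w this)
  · simp [ZMod.card]

lemma decomp (z : ZMod (g * w)) : ∃ x : ZMod w, z = iot g w (pr g w z) + phi g w x := by
  obtain ⟨⟨a, x⟩, h⟩ := (kappa_bij g w).surjective z
  simp only at h
  refine ⟨x, ?_⟩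
  have : pr g w z = a := by
    rw [← h, map_add, pr_iot, pr_phi, add_zero]
  rw [this, h]

lemma fiber_sum {β : Type} [Fintype β] (e : β → ZMod w) (he : Function.Bijective e)
    (z0 z : ZMod (g * w)) [inst : ∀ c : β, Decidable (z = z0 + phi g w (e c))]
    [inst2 : Decidable (pr g w z = pr g w z0)] :
    (∑ c : β, if z = z0 + phi g w (e c) then (1 : ℕ) else 0)
      = if pr g w z = pr g w z0 then 1 else 0 := by
  by_cases h : pr g w z = pr g w z0
  · rw [if_pos h]
    obtain ⟨x, hx⟩ := decomp g w (z - z0)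
    have hπ : pr g w (z - z0) = 0 := by rw [map_sub, h, sub_self]
    rw [hπ, iot_zero, zero_add] at hx
    obtain ⟨c0, hc0⟩ := he.surjective x
    have key : ∀ c : β, (z = z0 + phi g w (e c)) ↔ c = c0 := by
      intro c
      constructor
      · intro hc
        have h1 : phi g w (e c) = phi g w x := by
          rw [← hx, hc]
          ring
        have h2 : e c = e c0 := by rw [hc0]; exact phi_inj g w h1
        exact he.injective h2
      · rintro rfl
        rw [hc0, ← hx]
        exact (add_sub_cancel z0 z).symm
    simp only [key]
    simp
  · rw [if_neg h]
    refine Finset.sum_eq_zero fun c _ => ?_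
    rw [if_neg]
    intro hc
    exact h (by rw [hc, map_add, pr_phi, add_zero])

end Aux

lemma inSub_iff {n d : ℕ} [NeZero n] (hd : d ∣ n) (z : ZMod n) : inSub n d z ↔ d ∣ z.val := by
  constructor
  · rintro ⟨y, rfl⟩
    have : ((d : ZMod n) * y) = ((d * y.val : ℕ) : ZMod n) := by
      push_cast
      rw [ZMod.natCast_val, ZMod.cast_id]
    rw [this, ZMod.val_natCast]
    exact (Nat.dvd_mod_iff hd).mpr ⟨y.val, rfl⟩
  · rintro ⟨m, hm⟩
    refine ⟨(m : ZMod n), ?_⟩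
    have h1 : ((z.val : ℕ) : ZMod n) = z := ZMod.natCast_rightInverse z
    rw [← h1, hm]
    push_cast
    ring

section Aux2

variable (g s w : ℕ) [NeZero g] [NeZero w]

lemma val_iot_phi (d : ZMod g) (x : ZMod w) :
    (iot g w d + phi g w x).val = d.val + g * x.val := by
  haveI : NeZero (g * w) := ⟨Nat.mul_ne_zero (NeZero.ne g) (NeZero.ne w)⟩
  have h : iot g w d + phi g w x = ((d.val + g * x.val : ℕ) : ZMod (g * w)) := by
    unfold iot phi
    push_cast
    ring
  rw [h]
  apply ZMod.val_cast_of_lt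
  have h1 : d.val < g := ZMod.val_lt d
  have h2 : x.val < w := ZMod.val_lt x
  calc d.val + g * x.val < g + g * x.val := by omega
    _ = g * (x.val + 1) := by ring
    _ ≤ g * w := Nat.mul_le_mul_left g (by omega)

lemma sub_count (hs : 0 < s) (hsg : s ∣ g) (hgcd : Nat.gcd w (g / s) = 1) (d : ZMod g)
    [inst : ∀ x : ZMod w, Decidable (inSub (g * w) (s * w) (iot g w d + phi g w x))]
    [inst2 : Decidable (inSub g s d)] :
    (∑ x : ZMod w, if inSub (g * w) (s * w) (iot g w d + phi g w x) then (1 : ℕ) else 0)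
      = if inSub g s d then 1 else 0 := by
  haveI : NeZero (g * w) := ⟨Nat.mul_ne_zero (NeZero.ne g) (NeZero.ne w)⟩
  have hsw : s * w ∣ g * w := Nat.mul_dvd_mul_right hsg w
  obtain ⟨g', hg'⟩ := hsg
  have hg's : g / s = g' := by rw [hg', Nat.mul_div_cancel_left _ hs]
  rw [hg's] at hgcd
  have hcond : ∀ x : ZMod w,
      inSub (g * w) (s * w) (iot g w d + phi g w x) ↔ s * w ∣ d.val + g * x.val := by
    intro x
    rw [inSub_iff hsw, val_iot_phi]
  by_cases hd : s ∣ d.val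
  · have hind : inSub g s d := (inSub_iff ⟨g', hg'⟩ d).mpr hd
    rw [if_pos hind]
    obtain ⟨e, he⟩ := hd
    have hcop : Nat.Coprime g' w := Nat.Coprime.symm (Nat.coprime_iff_gcd_eq_one.mpr hgcd)
    set uu : (ZMod w)ˣ := ZMod.unitOfCoprime g' hcop with huu
    have huu' : (uu : ZMod w) = (g' : ZMod w) := rfl
    set x0 : ZMod w := (uu⁻¹ : (ZMod w)ˣ) * (-(e : ZMod w)) with hx0
    have key : ∀ x : ZMod w, (s * w ∣ d.val + g * x.val) ↔ x = x0 := by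
      intro x
      have h1 : d.val + g * x.val = s * (e + g' * x.val) := by
        rw [he, hg']; ring
      rw [h1, Nat.mul_dvd_mul_iff_left hs]
      constructor
      · intro hdvd
        have h2 : ((e + g' * x.val : ℕ) : ZMod w) = 0 :=
          (ZMod.natCast_eq_zero_iff _ _).mpr hdvd
        have h3 : (e : ZMod w) + (g' : ZMod w) * x = 0 := by
          rw [← h2]
          push_cast
          rw [ZMod.natCast_val, ZMod.cast_id]
        have h4 : (uu : ZMod w) * x = -(e : ZMod w) := by
          rw [huu']
          linear_combination h3
        rw [hx0]
        exact (Units.eq_inv_mul_iff_mul_eq uu).mpr h4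
      · intro hx
        have h4 : (uu : ZMod w) * x = -(e : ZMod w) :=
          (Units.eq_inv_mul_iff_mul_eq uu).mp (by rw [← hx0]; exact hx)
        have h3 : ((e + g' * x.val : ℕ) : ZMod w) = 0 := by
          push_cast
          rw [ZMod.natCast_val, ZMod.cast_id]
          rw [huu'] at h4
          linear_combination h4
        exact (ZMod.natCast_eq_zero_iff _ _).mp h3
    simp only [hcond, key]
    rw [Finset.sum_ite_eq' Finset.univ x0 (fun _ => 1)]
    simp
  · have hind : ¬ inSub g s d := by
      rw [inSub_iff ⟨g', hg'⟩]
      exact hd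
    rw [if_neg hind]
    refine Finset.sum_eq_zero fun x _ => ?_
    rw [if_neg]
    intro hx
    rw [hcond] at hx
    apply hd
    have h1 : s ∣ d.val + g * x.val := dvd_trans (Dvd.intro w rfl) hx
    have h2 : s ∣ g * x.val := Dvd.dvd.mul_right ⟨g', hg'⟩ x.val
    rw [Nat.add_comm] at h1
    exact (Nat.dvd_add_right h2).mp h1

end Aux2

lemma count_deltaList {n u : ℕ} (B : Fin u → Finset (ZMod n)) (z : ZMod n) :
    (deltaList B).count z
      = ∑ k : Fin u, ((B k ×ˢ B k).filter (fun p => p.1 ≠ p.2 ∧ z = p.1 - p.2)).card := by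
  unfold deltaList
  rw [Multiset.count_sum']
  refine Finset.sum_congr rfl fun k _ => ?_
  rw [Multiset.count_map, ← Finset.filter_val, Finset.filter_filter]
  rfl

lemma count_deltaE {n u : ℕ} (B B' : Fin u → Finset (ZMod n)) (z : ZMod n) :
    (deltaE B B').count z
      = ∑ k : Fin u, ((B k ×ˢ B' k).filter (fun p => z = p.2 - p.1)).card := by
  unfold deltaE
  rw [Multiset.count_sum']
  refine Finset.sum_congr rfl fun k _ => ?_
  rw [Multiset.count_map, ← Finset.filter_val]
  rfl

lemma card_filter_blockElems {n u : ℕ} (B : Fin u → Finset (ZMod n)) (p : ZMod n → Prop)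
    [DecidablePred p] :
    Multiset.card ((blockElems B).filter p) = ∑ k : Fin u, ((B k).filter p).card := by
  unfold blockElems
  rw [← Multiset.countP_eq_card_filter]
  have hcoe : ∀ m : Multiset (ZMod n), Multiset.countP p m = Multiset.countPAddMonoidHom p m := by
    intro m
    rw [Multiset.coe_countPAddMonoidHom]
  rw [hcoe, map_sum (Multiset.countPAddMonoidHom p) (fun i => (B i).val) Finset.univ]
  refine Finset.sum_congr rfl fun k _ => ?_
  rw [← hcoe, Multiset.countP_eq_card_filter, ← Finset.filter_val]
  rfl

lemma card_filter_prod_image {α β : Type*} [DecidableEq α] [DecidableEq β]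
    (s s' : Finset α) (F F' : α → β) (hF : Function.Injective F) (hF' : Function.Injective F')
    (Q : β × β → Prop) [DecidablePred Q] :
    (((s.image F) ×ˢ (s'.image F')).filter Q).card
      = ((s ×ˢ s').filter (fun q => Q (F q.1, F' q.2))).card := by
  rw [eq_comm]
  refine Finset.card_bij (fun q _ => (F q.1, F' q.2)) ?_ ?_ ?_
  · intro q hq
    simp only [Finset.mem_filter, Finset.mem_product] at hq ⊢
    exact ⟨⟨Finset.mem_image_of_mem F hq.1.1, Finset.mem_image_of_mem F' hq.1.2⟩, hq.2⟩
  · intro q1 _ q2 _ h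
    have h1 := congrArg Prod.fst h
    have h2 := congrArg Prod.snd h
    exact Prod.ext (hF h1) (hF' h2)
  · intro p hp
    obtain ⟨p1, p2⟩ := p
    have hp' := Finset.mem_filter.mp hp
    obtain ⟨hmem, hQ⟩ := hp'
    obtain ⟨hm1, hm2⟩ := Finset.mem_product.mp hmem
    obtain ⟨a, ha, rfl⟩ := Finset.mem_image.mp hm1
    obtain ⟨b, hb, rfl⟩ := Finset.mem_image.mp hm2
    exact ⟨(a, b), Finset.mem_filter.mpr ⟨Finset.mem_product.mpr ⟨ha, hb⟩, hQ⟩, rfl⟩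

lemma card_filter_image {α β : Type*} [DecidableEq α] [DecidableEq β]
    (s : Finset α) (F : α → β) (hF : Function.Injective F) (p : β → Prop) [DecidablePred p] :
    ((s.image F).filter p).card = (s.filter (fun a => p (F a))).card := by
  rw [eq_comm]
  refine Finset.card_bij (fun a _ => F a) ?_ ?_ ?_
  · intro a ha
    simp only [Finset.mem_filter] at ha ⊢
    exact ⟨Finset.mem_image_of_mem F ha.1, ha.2⟩
  · intro a1 _ a2 _ h
    exact hF h
  · intro b hb
    simp only [Finset.mem_filter, Finset.mem_image] at hb
    obtain ⟨⟨a, ha, rfl⟩, hp⟩ := hb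
    exact ⟨a, Finset.mem_filter.mpr ⟨ha, hp⟩, rfl⟩

set_option maxHeartbeats 1000000 in
theorem stmt7 (g s w M u t : ℕ) (hg : 0 < g) (hs : 0 < s) (hsg : s ∣ g) (hw : 0 < w)
    (K : Fin M → Set ℕ) (B : Fin M → Fin u → Finset (ZMod g))
    (hB : IsBNCDP g M u 1 K B)
    (hCSR : ∀ j, IsCSR g s (blockElems (B j)))
    (ht : t = Finset.univ.sup (fun k : Fin u => ∑ j : Fin M, (B j k).card))
    (hCDM : ∃ D : Fin t → Fin w → ZMod w, IsHomogeneousCDM w t D)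
    (hgcd : Nat.gcd w (g / s) = 1) :
    ∃ B' : Fin M → Fin (u * w) → Finset (ZMod (g * w)),
      IsBNCDP (g * w) M (u * w) 1 K B' ∧
      ∀ j, IsCSR (g * w) (s * w) (blockElems (B' j)) := by
  haveI : NeZero g := ⟨hg.ne'⟩
  haveI : NeZero w := ⟨hw.ne'⟩
  haveI : NeZero (g * w) := ⟨Nat.mul_ne_zero hg.ne' hw.ne'⟩
  rcases Nat.eq_zero_or_pos M with hM | hM
  · subst hM
    exact ⟨fun j => j.elim0, ⟨fun j => j.elim0, fun j => j.elim0⟩, fun j => j.elim0⟩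
  have j0 : Fin M := ⟨0, hM⟩
  -- t is positive
  have ht0 : 0 < t := by
    have h1 := hCSR j0 0
    have h2 : 0 < Multiset.card (blockElems (B j0)) := by
      have h3 := Multiset.card_le_card
        (Multiset.filter_le (fun tt => inSub g s (0 - tt)) (blockElems (B j0)))
      omega
    have h3 : ∃ k : Fin u, (B j0 k).Nonempty := by
      by_contra hcon
      push_neg at hcon
      have hz : blockElems (B j0) = 0 := by
        unfold blockElems
        refine Finset.sum_eq_zero fun k _ => ?_
        have hk := Finset.not_nonempty_iff_eq_empty.mp (by
          intro hne
          exact absurd hne.card_pos (by simpa using hcon k))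
        rw [hk]; rfl
      rw [hz] at h2; simp at h2
    obtain ⟨k, hk⟩ := h3
    have h4 : 1 ≤ ∑ j : Fin M, (B j k).card :=
      le_trans (Finset.card_pos.mpr hk)
        (Finset.single_le_sum (f := fun j => (B j k).card) (fun _ _ => Nat.zero_le _)
          (Finset.mem_univ j0))
    have h5 : ∑ j : Fin M, (B j k).card ≤ t := by
      rw [ht]
      exact Finset.le_sup (f := fun k : Fin u => ∑ j : Fin M, (B j k).card) (Finset.mem_univ k)
    omega
  obtain ⟨D, hD1, hD2⟩ := hCDM
  -- row assignment
  set S : Fin u → Finset (Fin M × ZMod g) :=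
    fun k => Finset.univ.filter (fun p => p.2 ∈ B p.1 k) with hS
  have hcardS : ∀ k, (S k).card ≤ t := by
    intro k
    have h1 : (S k).card = ∑ j : Fin M, (B j k).card := by
      rw [hS]
      rw [Finset.card_filter, ← Finset.univ_product_univ, Finset.sum_product]
      refine Finset.sum_congr rfl fun j _ => ?_
      simp [Finset.sum_boole, Finset.filter_univ_mem]
    rw [h1, ht]
    exact Finset.le_sup (f := fun k : Fin u => ∑ j : Fin M, (B j k).card) (Finset.mem_univ k)
  have hEmb : ∀ k, Nonempty (↥(S k) ↪ Fin t) := fun k =>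
    Function.Embedding.nonempty_iff_card_le.mpr
      (by rw [Fintype.card_coe, Fintype.card_fin]; exact hcardS k)
  have E : ∀ k : Fin u, ↥(S k) ↪ Fin t := fun k => (hEmb k).some
  set row : Fin u → Fin M → ZMod g → Fin t :=
    fun k j a => if h : (j, a) ∈ S k then E k ⟨(j, a), h⟩ else ⟨0, ht0⟩ with hrow
  have hmemS : ∀ {k : Fin u} {j : Fin M} {a : ZMod g}, a ∈ B j k → (j, a) ∈ S k := by
    intro k j a h; rw [hS]; simp [h]
  have hrow_ne : ∀ {k : Fin u} {j j' : Fin M} {a b : ZMod g}, a ∈ B j k → b ∈ B j' k →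
      (j, a) ≠ (j', b) → row k j a ≠ row k j' b := by
    intro k j j' a b ha hb hne
    rw [hrow]
    simp only
    rw [dif_pos (hmemS ha), dif_pos (hmemS hb)]
    exact (E k).injective.ne (by simpa [Subtype.ext_iff] using hne)
  set f : Fin M → Fin u → Fin w → ZMod g → ZMod (g * w) :=
    fun j k c a => iot g w a + phi g w (D (row k j a) c) with hf
  have hprf : ∀ j k c a, pr g w (f j k c a) = a := by
    intro j k c a
    rw [hf]
    simp only
    rw [map_add, pr_iot, pr_phi, add_zero]
  have hfinj : ∀ j k c, Function.Injective (f j k c) := by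
    intro j k c a b hab
    have h := congrArg (pr g w) hab
    rwa [hprf, hprf] at h
  have hphisub : ∀ x y : ZMod w, phi g w (x - y) = phi g w x - phi g w y := by
    intro x y
    exact map_sub (phiHom g w) x y
  set e : Fin (u * w) ≃ Fin u × Fin w := finProdFinEquiv.symm with he
  set B2 : Fin M → Fin u × Fin w → Finset (ZMod (g * w)) :=
    fun j p => (B j p.1).image (f j p.1 p.2) with hB2
  -- count transfer for internal differences
  have hDL : ∀ (j : Fin M) (z : ZMod (g * w)),
      (deltaList (fun i => B2 j (e i))).count z = (deltaList (B j)).count (pr g w z) := by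
    intro j z
    rw [count_deltaList, count_deltaList]
    have h1 : (∑ i : Fin (u * w),
        ((B2 j (e i) ×ˢ B2 j (e i)).filter (fun q => q.1 ≠ q.2 ∧ z = q.1 - q.2)).card)
        = ∑ p : Fin u × Fin w,
        ((B2 j p ×ˢ B2 j p).filter (fun q => q.1 ≠ q.2 ∧ z = q.1 - q.2)).card :=
      Equiv.sum_comp e (fun p => ((B2 j p ×ˢ B2 j p).filter (fun q => q.1 ≠ q.2 ∧ z = q.1 - q.2)).card)
    rw [h1, Fintype.sum_prod_type]
    refine Finset.sum_congr rfl fun k _ => ?_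
    have h2 : ∀ c : Fin w,
        ((B2 j (k, c) ×ˢ B2 j (k, c)).filter (fun q => q.1 ≠ q.2 ∧ z = q.1 - q.2)).card
        = ((B j k ×ˢ B j k).filter
            (fun q => q.1 ≠ q.2 ∧ z = f j k c q.1 - f j k c q.2)).card := by
      intro c
      rw [hB2]
      simp only
      refine Eq.trans (card_filter_prod_image (B j k) (B j k) (f j k c) (f j k c)
        (hfinj j k c) (hfinj j k c) (fun q => q.1 ≠ q.2 ∧ z = q.1 - q.2)) ?_
      have hset : ((B j k ×ˢ B j k).filter
            (fun q => (f j k c q.1, f j k c q.2).1 ≠ (f j k c q.1, f j k c q.2).2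
              ∧ z = (f j k c q.1, f j k c q.2).1 - (f j k c q.1, f j k c q.2).2))
          = ((B j k ×ˢ B j k).filter
            (fun q => q.1 ≠ q.2 ∧ z = f j k c q.1 - f j k c q.2)) := by
        ext q
        simp only [Finset.mem_filter]
        exact and_congr_right fun _ =>
          and_congr_left fun _ => (hfinj j k c).ne_iff
      rw [hset]
    simp only [h2, Finset.card_filter]
    rw [Finset.sum_comm]
    refine Finset.sum_congr rfl fun q hq => ?_
    by_cases hne : q.1 = q.2
    · simp [hne]
    · obtain ⟨hq1, hq2⟩ := Finset.mem_product.mp hq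
      have hr : row k j q.2 ≠ row k j q.1 :=
        hrow_ne hq2 hq1 (fun hc => hne (congrArg Prod.snd hc).symm)
      have hbij := hD2 _ _ hr
      have hfsub : ∀ c : Fin w, f j k c q.1 - f j k c q.2
          = (iot g w q.1 - iot g w q.2)
            + phi g w (D (row k j q.1) c - D (row k j q.2) c) := by
        intro c
        rw [hf]
        simp only
        rw [hphisub]
        ring
      have hz0 : pr g w (iot g w q.1 - iot g w q.2) = q.1 - q.2 := by
        rw [map_sub, pr_iot, pr_iot]
      have hfs := fiber_sum g w _ hbij (iot g w q.1 - iot g w q.2) z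
      rw [hz0] at hfs
      simp only [ne_eq, hne, not_false_eq_true, true_and, hfsub]
      convert hfs using 2
  -- count transfer for external differences
  have hDE : ∀ (j j' : Fin M), j ≠ j' → ∀ (z : ZMod (g * w)),
      (deltaE (fun i => B2 j (e i)) (fun i => B2 j' (e i))).count z
        = (deltaE (B j) (B j')).count (pr g w z) := by
    intro j j' hjj' z
    rw [count_deltaE, count_deltaE]
    have h1 : (∑ i : Fin (u * w),
        ((B2 j (e i) ×ˢ B2 j' (e i)).filter (fun q => z = q.2 - q.1)).card)
        = ∑ p : Fin u × Fin w,
        ((B2 j p ×ˢ B2 j' p).filter (fun q => z = q.2 - q.1)).card :=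
      Equiv.sum_comp e (fun p => ((B2 j p ×ˢ B2 j' p).filter (fun q => z = q.2 - q.1)).card)
    rw [h1, Fintype.sum_prod_type]
    refine Finset.sum_congr rfl fun k _ => ?_
    have h2 : ∀ c : Fin w,
        ((B2 j (k, c) ×ˢ B2 j' (k, c)).filter (fun q => z = q.2 - q.1)).card
        = ((B j k ×ˢ B j' k).filter
            (fun q => z = f j' k c q.2 - f j k c q.1)).card := by
      intro c
      rw [hB2]
      simp only
      exact card_filter_prod_image (B j k) (B j' k) (f j k c) (f j' k c)
        (hfinj j k c) (hfinj j' k c) (fun q => z = q.2 - q.1)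
    simp only [h2, Finset.card_filter]
    rw [Finset.sum_comm]
    refine Finset.sum_congr rfl fun q hq => ?_
    obtain ⟨hq1, hq2⟩ := Finset.mem_product.mp hq
    have hr : row k j q.1 ≠ row k j' q.2 :=
      hrow_ne hq1 hq2 (fun hc => hjj' (congrArg Prod.fst hc))
    have hbij := hD2 _ _ hr
    have hfsub : ∀ c : Fin w, f j' k c q.2 - f j k c q.1
        = (iot g w q.2 - iot g w q.1)
          + phi g w (D (row k j' q.2) c - D (row k j q.1) c) := by
      intro c
      rw [hf]
      simp only
      rw [hphisub]
      ring
    have hz0 : pr g w (iot g w q.2 - iot g w q.1) = q.2 - q.1 := by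
      rw [map_sub, pr_iot, pr_iot]
    have hfs := fiber_sum g w _ hbij (iot g w q.2 - iot g w q.1) z
    rw [hz0] at hfs
    simp only [hfsub]
    convert hfs using 2
  -- count 0 in base deltaList is 0
  have hDL0 : ∀ j : Fin M, (deltaList (B j)).count 0 = 0 := by
    intro j
    rw [count_deltaList]
    refine Finset.sum_eq_zero fun k _ => ?_
    rw [Finset.card_eq_zero, Finset.filter_eq_empty_iff]
    rintro q _ ⟨hne, heq⟩
    exact hne (by rw [eq_comm, sub_eq_zero] at heq; exact heq)
  -- CSR transfer
  have hBE : ∀ (j : Fin M) (x : ZMod (g * w)),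
      Multiset.card ((blockElems (fun i => B2 j (e i))).filter
        (fun tt => inSub (g * w) (s * w) (x - tt)))
      = Multiset.card ((blockElems (B j)).filter
        (fun a => inSub g s (pr g w x - a))) := by
    intro j x
    rw [card_filter_blockElems, card_filter_blockElems]
    have h1 : (∑ i : Fin (u * w),
        ((B2 j (e i)).filter (fun tt => inSub (g * w) (s * w) (x - tt))).card)
        = ∑ p : Fin u × Fin w,
        ((B2 j p).filter (fun tt => inSub (g * w) (s * w) (x - tt))).card :=
      Equiv.sum_comp e (fun p => ((B2 j p).filter (fun tt => inSub (g * w) (s * w) (x - tt))).card)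
    rw [h1, Fintype.sum_prod_type]
    refine Finset.sum_congr rfl fun k _ => ?_
    have h2 : ∀ c : Fin w,
        ((B2 j (k, c)).filter (fun tt => inSub (g * w) (s * w) (x - tt))).card
        = ((B j k).filter (fun a => inSub (g * w) (s * w) (x - f j k c a))).card := by
      intro c
      rw [hB2]
      simp only
      exact card_filter_image (B j k) (f j k c) (hfinj j k c) _
    simp only [h2, Finset.card_filter]
    rw [Finset.sum_comm]
    refine Finset.sum_congr rfl fun a ha => ?_
    -- inner sum over c
    set r : Fin t := row k j a with hr
    have hstep1 : (∑ c : Fin w, if inSub (g * w) (s * w) (x - f j k c a) then (1:ℕ) else 0)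
        = ∑ x' : ZMod w, if inSub (g * w) (s * w) ((x - iot g w a) - phi g w x') then (1:ℕ) else 0 := by
      have hEq : ∀ c : Fin w, x - f j k c a = (x - iot g w a) - phi g w (D r c) := by
        intro c
        rw [hf]
        simp only [← hr]
        ring
      simp only [hEq]
      exact Equiv.sum_comp (Equiv.ofBijective (D r) (hD1 r))
        (fun x' => if inSub (g * w) (s * w) ((x - iot g w a) - phi g w x') then (1:ℕ) else 0)
    rw [hstep1]
    obtain ⟨x1, hx1⟩ := decomp g w (x - iot g w a)
    have hd : pr g w (x - iot g w a) = pr g w x - a := by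
      rw [map_sub, pr_iot]
    have hstep2 : ∀ x' : ZMod w, (x - iot g w a) - phi g w x'
        = iot g w (pr g w x - a) + phi g w (x1 - x') := by
      intro x'
      rw [hphisub]
      rw [hx1, hd]
      ring
    simp only [hstep2]
    have hstep3 : (∑ x' : ZMod w, if inSub (g * w) (s * w)
          (iot g w (pr g w x - a) + phi g w (x1 - x')) then (1:ℕ) else 0)
        = ∑ x'' : ZMod w, if inSub (g * w) (s * w)
          (iot g w (pr g w x - a) + phi g w x'') then (1:ℕ) else 0 :=
      Equiv.sum_comp (Equiv.subLeft x1)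
        (fun x'' => if inSub (g * w) (s * w) (iot g w (pr g w x - a) + phi g w x'') then (1:ℕ) else 0)
    rw [hstep3, sub_count g s w hs hsg hgcd (pr g w x - a)]
  -- assemble
  refine ⟨fun j i => B2 j (e i), ⟨?_, ?_⟩, ?_⟩
  · intro j
    constructor
    · intro i
      rw [hB2]
      simp only
      rw [Finset.card_image_of_injective _ (hfinj j (e i).1 (e i).2)]
      exact (hB.1 j).1 (e i).1
    · intro x hx
      rw [hDL j x]
      by_cases hπ : pr g w x = 0
      · rw [hπ, hDL0 j]
        exact Nat.zero_le 1
      · exact (hB.1 j).2 (pr g w x) hπ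
  · intro j j' hjj' x
    rw [hDE j j' hjj' x]
    exact hB.2 j j' hjj' (pr g w x)
  · intro j x
    rw [hBE j x]
    exact hCSR j (pr g w x)
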